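/- arXiv:1703.00515 — 2 statements merged into one kernel-verified Lean document; each statement's English description precedes it below -/
import Mathlib

section
/- Let l be a filter on a type α and let ρ₁, ρ₂ : α → ℝ be functions that are everywhere strictly positive. If the quotient ρ₂/ρ₁ tends to 0 along l, then there exists an everywhere strictly positive function ρ₀ : α → ℝ (for instance the geometric mean √(ρ₁ρ₂)) such that ρ₂/ρ₀ tends to 0 along l and ρ₀/ρ₁ tends to 0 along l. -/
/-! The geometric mean `ρ₀ = √(ρ₁ ρ₂)` works: both `ρ₂ / ρ₀` and `ρ₀ / ρ₁` equal `√(ρ₂ / ρ₁)`,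
which tends to `√0 = 0`. -/

open Real

theorem div_sqrt_mul_eq_sqrt_div {a c : ℝ} (hc : 0 ≤ c) : c / √(a * c) = √(c / a) := by
  rw [sqrt_mul' a hc, sqrt_div hc, div_mul_eq_div_div_swap, div_sqrt]

theorem sqrt_mul_div_left_eq_sqrt_div {a : ℝ} (c : ℝ) (ha : 0 ≤ a) :
    √(a * c) / a = √(c / a) := by
  rw [sqrt_mul ha, sqrt_div' c ha, mul_div_right_comm, sqrt_div_self', one_div_mul_eq_div]

/-- Intermediate ideals: given strictly positive weights ρ₁, ρ₂ with ρ₂/ρ₁ → 0 along `l`,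
there is a strictly positive intermediate weight ρ₀ with ρ₂/ρ₀ → 0 and ρ₀/ρ₁ → 0. -/
theorem intermediate_weight_exists {α : Type*} (l : Filter α) (ρ₁ ρ₂ : α → ℝ)
    (h₁ : ∀ x, 0 < ρ₁ x) (h₂ : ∀ x, 0 < ρ₂ x)
    (h : Filter.Tendsto (fun x => ρ₂ x / ρ₁ x) l (nhds 0)) :
    ∃ ρ₀ : α → ℝ, (∀ x, 0 < ρ₀ x) ∧
      Filter.Tendsto (fun x => ρ₂ x / ρ₀ x) l (nhds 0) ∧
      Filter.Tendsto (fun x => ρ₀ x / ρ₁ x) l (nhds 0) := by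
  have hsqrt : Filter.Tendsto (fun x => √(ρ₂ x / ρ₁ x)) l (nhds 0) := by
    simpa only [sqrt_zero] using h.sqrt
  refine ⟨fun x => √(ρ₁ x * ρ₂ x), fun x => sqrt_pos.2 (mul_pos (h₁ x) (h₂ x)), ?_, ?_⟩
  · exact hsqrt.congr fun x => (div_sqrt_mul_eq_sqrt_div (h₂ x).le).symm
  · exact hsqrt.congr fun x => (sqrt_mul_div_left_eq_sqrt_div (ρ₂ x) (h₁ x).le).symm
end

section
/- Let f : ℂ → ℂ be analytic (complex differentiable) on the open unit disc {z : |z| < 1} and bounded there, say ‖f(z)‖ < M for all |z| < 1. Let E be the set of angles θ ∈ [0, 2π) such that the radial limit lim_{r→1⁻} f(r·e^{iθ}) exists and equals 0. If E has strictly positive Lebesgue measure, then f is identically zero on the unit disc. -/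
/-!
If `f ≢ 0`, Jensen's formula bounds the circle averages of `log ‖f‖` below uniformly in the
radius `r ∈ [1/2, 1)`, while `log ‖f‖ < log M`. Along radii `rₘ → 1` whose circles avoid the
zeros of `f`, the functions `θ ↦ log M - log ‖f (rₘ e^{iθ})‖` are therefore nonnegative with
bounded integrals, so by Fatou's lemma their `liminf` is finite for almost every `θ`. It is
`+∞` wherever the radial limit of `f` is `0`.
-/

open Metric MeasureTheory Filter Set Real Topology MeromorphicOn

theorem AnalyticOnNhd.exists_le_circleAverage_log_norm {f : ℂ → ℂ} {c : ℂ} {r₀ R : ℝ}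
    (hf : AnalyticOnNhd ℂ f (ball c R)) (hr₀ : 0 < r₀) :
    ∃ C, ∀ r ∈ Ico r₀ R, C ≤ circleAverage (fun z ↦ Real.log ‖f z‖) c r := by
  -- In Jensen's formula the zeros `u ≠ c` contribute `log (r / ‖c - u‖) ≥ 0`, and a zero of
  -- order `n` at `c` contributes `n log r ≥ n log r₀`.
  refine ⟨(meromorphicOrderAt f c).untop₀ * Real.log r₀
    + Real.log ‖meromorphicTrailingCoeffAt f c‖, fun r ⟨hr₀r, hrR⟩ ↦ ?_⟩
  have hr : 0 < r := hr₀.trans_le hr₀r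
  have hfr : AnalyticOnNhd ℂ f (closedBall c |r|) :=
    hf.mono (closedBall_subset_ball (by rwa [abs_of_pos hr]))
  have hc : c ∈ closedBall c |r| := mem_closedBall_self (abs_nonneg r)
  have hord : 0 ≤ (meromorphicOrderAt f c).untop₀ := by
    simpa [hfr.meromorphicOn, hc] using hfr.divisor_nonneg c
  have hsum : 0 ≤ ∑ᶠ u, divisor f (closedBall c |r|) u * Real.log (r * ‖c - u‖⁻¹) := by
    refine finsum_nonneg fun u ↦ ?_
    by_cases hu : u ∈ closedBall c |r|
    · refine mul_nonneg (by exact_mod_cast hfr.divisor_nonneg u) ?_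
      rcases eq_or_ne u c with rfl | huc
      · simp -- `‖c - c‖⁻¹ = 0` and `log 0 = 0`
      · rw [mem_closedBall, dist_comm, dist_eq_norm, abs_of_pos hr] at hu
        have hcu : 0 < ‖c - u‖ := norm_pos_iff.mpr (sub_ne_zero.mpr huc.symm)
        exact Real.log_nonneg (by rw [← div_eq_mul_inv, le_div_iff₀ hcu]; linarith)
    · simp [hu]
  rw [hfr.meromorphicOn.circleAverage_log_norm hr.ne', divisor_apply hfr.meromorphicOn hc]
  have hcentre : ((meromorphicOrderAt f c).untop₀ : ℝ) * Real.log r₀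
      ≤ (meromorphicOrderAt f c).untop₀ * Real.log r :=
    mul_le_mul_of_nonneg_left (Real.log_le_log hr₀ hr₀r) (by exact_mod_cast hord)
  linarith

theorem AnalyticOnNhd.exists_mem_Ioo_forall_mem_sphere_ne_zero {f : ℂ → ℂ} {c z₀ : ℂ}
    {R a b : ℝ} (hf : AnalyticOnNhd ℂ f (ball c R)) (hz₀ : z₀ ∈ ball c R) (hfz₀ : f z₀ ≠ 0)
    (hab : a < b) (hbR : b < R) :
    ∃ r ∈ Ioo a b, ∀ z ∈ sphere c r, f z ≠ 0 := by
  have hzeros : (closedBall c b ∩ f ⁻¹' {0}).Finite := by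
    have hcod := hf.preimage_zero_mem_codiscreteWithin hfz₀ hz₀
      (isConnected_ball (pos_of_mem_ball hz₀))
    simpa [sdiff_compl] using (isCompact_closedBall c b).finite_sdiff_of_mem_codiscreteWithin
      (codiscreteWithin_mono (closedBall_subset_ball hbR) hcod)
  obtain ⟨r, hr, hbad⟩ := ((Ioo_infinite hab).sdiff (hzeros.image (dist · c))).nonempty
  refine ⟨r, hr, fun z hz hfz ↦ hbad ⟨z, ⟨?_, hfz⟩, hz⟩⟩
  rw [mem_closedBall, mem_sphere.mp hz]
  exact hr.2.le

theorem AnalyticOnNhd.exists_seq_tendsto_forall_mem_sphere_ne_zero {f : ℂ → ℂ} {c z₀ : ℂ}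
    {r₀ R : ℝ} (hf : AnalyticOnNhd ℂ f (ball c R)) (hz₀ : z₀ ∈ ball c R) (hfz₀ : f z₀ ≠ 0)
    (hr₀ : r₀ < R) :
    ∃ r : ℕ → ℝ, (∀ m, r m ∈ Ioo r₀ R) ∧ Tendsto r atTop (𝓝[<] R) ∧
      ∀ m, ∀ z ∈ sphere c (r m), f z ≠ 0 := by
  obtain ⟨u, hu_mono, hu_mem, hu_lim⟩ := exists_seq_strictMono_tendsto' hr₀
  choose r hr hsph using fun m ↦ hf.exists_mem_Ioo_forall_mem_sphere_ne_zero hz₀ hfz₀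
    (hu_mono (Nat.lt_succ_self m)) (hu_mem (m + 1)).2
  refine ⟨r, fun m ↦ ⟨(hu_mem m).1.trans (hr m).1, (hr m).2.trans (hu_mem (m + 1)).2⟩,
    tendsto_nhdsWithin_iff.mpr ⟨?_, .of_forall fun m ↦ (hr m).2.trans (hu_mem (m + 1)).2⟩, hsph⟩
  exact tendsto_of_tendsto_of_tendsto_of_le_of_le hu_lim
    (hu_lim.comp (tendsto_add_atTop_nat 1)) (fun m ↦ (hr m).1.le) (fun m ↦ (hr m).2.le)

theorem MeasureTheory.measure_eq_zero_of_integral_le_of_tendsto_atTop {α : Type*}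
    [MeasurableSpace α] {μ : Measure α} {v : ℕ → α → ℝ} {B : ℝ} {E : Set α}
    (hmeas : ∀ m, Measurable (v m)) (hint : ∀ m, Integrable (v m) μ)
    (hnonneg : ∀ m, 0 ≤ᵐ[μ] v m) (hbd : ∀ m, ∫ x, v m x ∂μ ≤ B)
    (hE : ∀ x ∈ E, Tendsto (fun m ↦ v m x) atTop atTop) :
    μ E = 0 := by
  set V : ℕ → α → ENNReal := fun m x ↦ ENNReal.ofReal (v m x)
  have hV : ∀ m, Measurable (V m) := fun m ↦ (hmeas m).ennreal_ofReal
  have hfatou : ∫⁻ x, liminf (fun m ↦ V m x) atTop ∂μ ≤ ENNReal.ofReal B := by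
    refine (lintegral_liminf_le hV).trans (liminf_le_of_frequently_le' (.of_forall fun m ↦ ?_))
    rw [← ofReal_integral_eq_lintegral_ofReal (hint m) (hnonneg m)]
    exact ENNReal.ofReal_le_ofReal (hbd m)
  refine measure_mono_null (fun x hx ↦ ?_)
    (ae_lt_top (.liminf hV) (hfatou.trans_lt ENNReal.ofReal_lt_top).ne)
  exact fun hlt ↦ hlt.ne (ENNReal.tendsto_ofReal_atTop.comp (hE x hx)).liminf_eq

theorem AnalyticOnNhd.volume_setOf_tendsto_circleMap_zero_eq_zero {f : ℂ → ℂ} {c : ℂ}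
    {M r₀ R : ℝ} {r : ℕ → ℝ} (hf : AnalyticOnNhd ℂ f (ball c R))
    (hbd : ∀ z ∈ ball c R, ‖f z‖ < M) (hr₀ : 0 < r₀) (hr : ∀ m, r m ∈ Ioo r₀ R)
    (hsph : ∀ m, ∀ z ∈ sphere c (r m), f z ≠ 0) :
    volume.restrict (Ioc 0 (2 * π))
      {θ | Tendsto (fun m ↦ f (circleMap c (r m) θ)) atTop (𝓝 0)} = 0 := by
  obtain ⟨C, hC⟩ := hf.exists_le_circleAverage_log_norm hr₀
  have hsphere : ∀ m θ, circleMap c (r m) θ ∈ sphere c (r m) :=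
    fun m ↦ circleMap_mem_sphere c (hr₀.trans (hr m).1).le
  have hball : ∀ m θ, circleMap c (r m) θ ∈ ball c R :=
    fun m θ ↦ sphere_subset_ball (hr m).2 (hsphere m θ)
  have hne : ∀ m θ, f (circleMap c (r m) θ) ≠ 0 := fun m θ ↦ hsph m _ (hsphere m θ)
  have hlog_cont : ∀ m, Continuous fun θ ↦ Real.log ‖f (circleMap c (r m) θ)‖ := fun m ↦
    (hf.continuousOn.comp_continuous (continuous_circleMap c (r m)) (hball m)).norm.log
      fun θ ↦ norm_ne_zero_iff.mpr (hne m θ)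
  refine measure_eq_zero_of_integral_le_of_tendsto_atTop
    (v := fun m θ ↦ Real.log M - Real.log ‖f (circleMap c (r m) θ)‖)
    (B := 2 * π * (Real.log M - C))
    (fun m ↦ (continuous_const.sub (hlog_cont m)).measurable)
    (fun m ↦ (continuous_const.sub (hlog_cont m)).integrableOn_Ioc)
    (fun m ↦ ae_of_all _ fun θ ↦ sub_nonneg.mpr <|
      Real.log_le_log (norm_pos_iff.mpr (hne m θ)) (hbd _ (hball m θ)).le)
    (fun m ↦ ?_) (fun θ hθ ↦ ?_)
  · have hmean := hC (r m) ⟨(hr m).1.le, (hr m).2⟩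
    rw [circleAverage_def, smul_eq_mul, le_inv_mul_iff₀ two_pi_pos] at hmean
    rw [← intervalIntegral.integral_of_le two_pi_pos.le, intervalIntegral.integral_sub
      intervalIntegrable_const ((hlog_cont m).intervalIntegrable _ _),
      intervalIntegral.integral_const, smul_eq_mul, sub_zero]
    linarith
  · have hlog : Tendsto (fun m ↦ Real.log ‖f (circleMap c (r m) θ)‖) atTop atBot :=
      Real.tendsto_log_nhdsGT_zero.comp <| tendsto_norm_nhdsNE_zero.comp <|
        tendsto_nhdsWithin_iff.mpr ⟨hθ, .of_forall (hne · θ)⟩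
    simpa only [sub_eq_add_neg, Function.comp_def] using
      tendsto_atTop_add_const_left _ (Real.log M) (tendsto_neg_atBot_atTop.comp hlog)

/-- F. and M. Riesz / Privalov-type uniqueness theorem: a bounded analytic function on the unit
disc whose radial limits vanish on a set of angles of positive measure vanishes identically. -/
theorem riesz_uniqueness (f : ℂ → ℂ) (M : ℝ)
    (hf : DifferentiableOn ℂ f (Metric.ball (0 : ℂ) 1))
    (hbd : ∀ z ∈ Metric.ball (0 : ℂ) 1, ‖f z‖ < M)
    (E : Set ℝ)
    (hE : E = {θ ∈ Set.Ico (0 : ℝ) (2 * Real.pi) |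
      Filter.Tendsto (fun r : ℝ => f ((r : ℂ) * Complex.exp ((θ : ℂ) * Complex.I)))
        (nhdsWithin 1 (Set.Iio 1)) (nhds 0)})
    (hpos : 0 < MeasureTheory.volume E) :
    ∀ z ∈ Metric.ball (0 : ℂ) 1, f z = 0 := by
  intro z hz
  by_contra hfz
  have hfa := hf.analyticOnNhd isOpen_ball
  obtain ⟨r, hr, hr_lim, hsph⟩ :=
    hfa.exists_seq_tendsto_forall_mem_sphere_ne_zero hz hfz (r₀ := 1 / 2) (by norm_num)
  have hnull := hfa.volume_setOf_tendsto_circleMap_zero_eq_zero hbd (by norm_num) hr hsph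
  have hEsub : E ⊆ Ico 0 (2 * π) := hE ▸ sep_subset _ _
  refine hpos.ne' ?_
  rw [← Measure.restrict_eq_self volume hEsub, Measure.restrict_congr_set Ico_ae_eq_Ioc]
  refine measure_mono_null (fun θ hθ ↦ ?_) hnull
  rw [hE] at hθ
  simpa [circleMap, Function.comp_def] using hθ.2.comp hr_lim
end
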